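/- arXiv:2209.04676 — 5 statements merged into one kernel-verified Lean document; each statement's English description precedes it below -/
import Mathlib

section
/- Let γ ∈ (0,1], σ > 3 and α ∈ [0,1/2) with σ − α > 3. There exists a constant C > 0, depending only on γ, σ and α, such that for every z ≥ 0, every t ≥ 0, and all functions a, b : ℤ³ → ℂ with a(0) = b(0) = 0 for which M_a := sup_{ℓ ∈ ℤ³, ℓ ≠ 0} exp(z⟨ℓ,ℓt⟩^γ)·⟨ℓ,ℓt⟩^σ·|ℓ|^{−α}·|a(ℓ)| and M_b := sup_{ℓ ∈ ℤ³, ℓ ≠ 0} exp(z⟨ℓ,ℓt⟩^γ)·⟨ℓ,ℓt⟩^σ·|ℓ|^{−α}·|b(ℓ)| are both finite, the convolution c(k) := ∑_{ℓ ∈ ℤ³} a(ℓ)·b(k−ℓ) converges absolutely for every k ∈ ℤ³ and satisfies sup_{k ∈ ℤ³, k ≠ 0} exp(z⟨k,kt⟩^γ)·⟨k,kt⟩^σ·|k|^{−α}·|c(k)| ≤ C·M_a·M_b. -/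
/-- Euclidean norm of a lattice point `k ∈ ℤ³`, viewed as a vector of `ℝ³`. -/
noncomputable def knorm (k : Fin 3 → ℤ) : ℝ := Real.sqrt (∑ i, ((k i : ℝ)) ^ 2)

/-- Japanese bracket `⟨k, kt⟩ = √(1 + |k|² + |kt|²)`. -/
noncomputable def jb (k : Fin 3 → ℤ) (t : ℝ) : ℝ :=
  Real.sqrt (1 + (∑ i, ((k i : ℝ)) ^ 2) + (∑ i, (t * (k i : ℝ)) ^ 2))

/-- The weight `exp(z⟨k,kt⟩^γ)·⟨k,kt⟩^σ·|k|^{-α}` of the generator function `F`. -/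
noncomputable def W (γ σ α z t : ℝ) (k : Fin 3 → ℤ) : ℝ :=
  Real.exp (z * jb k t ^ γ) * jb k t ^ σ * knorm k ^ (-α)

/-!
Write the weight as `W(k) = exp(z⟨k,kt⟩^γ) · P(k)` with `P(k) = ⟨k,kt⟩^σ |k|^{-α}` and let
`k = ℓ + m` with `⟨m,mt⟩ ≤ ⟨ℓ,ℓt⟩`. The triangle inequality for the bracket and subadditivity of
`x ↦ x^γ` give `exp(z⟨k,kt⟩^γ) ≤ exp(z⟨ℓ,ℓt⟩^γ) exp(z⟨m,mt⟩^γ)`. Since `⟨k,kt⟩ ≤ 2⟨ℓ,ℓt⟩` and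
`⟨k,kt⟩/|k|` lies between `√(1+t²)` and `√2·√(1+t²)` for every `k ≠ 0`, also `P(k) ≲ P(ℓ)`,
uniformly in `t`. As `P(m) ≥ |m|^{σ-α}`, this yields
`W(k) ≲ (|ℓ|^{α-σ} + |m|^{α-σ}) W(ℓ) W(m)`, so `W(k)|c(k)| ≲ M_a M_b ∑_ℓ |ℓ|^{α-σ}`,
a lattice sum that converges because `σ - α > 3`.
-/

open Real

section ConvolutionWeight

variable {G : Type*} [AddCommGroup G]

structure IsConvolutionWeight (w g : G → ℝ) (K : ℝ) : Prop where
  const_nonneg : 0 ≤ K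
  nonneg : ∀ ℓ, 0 ≤ g ℓ
  summable : Summable g
  one_le_mul : ∀ ℓ ≠ 0, 1 ≤ g ℓ * w ℓ
  add_le : ∀ ℓ m, ℓ ≠ 0 → m ≠ 0 → ℓ + m ≠ 0 → w (ℓ + m) ≤ K * (g ℓ + g m) * (w ℓ * w m)

namespace IsConvolutionWeight

variable {w g : G → ℝ} {K M Ma Mb : ℝ} {a b : G → ℂ}

lemma pos (hw : IsConvolutionWeight w g K) {ℓ : G} (hℓ : ℓ ≠ 0) : 0 < w ℓ := by
  by_contra! h
  nlinarith [hw.one_le_mul ℓ hℓ, hw.nonneg ℓ]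

lemma bound_nonneg [Nontrivial G] (hw : IsConvolutionWeight w g K)
    (ha : ∀ ℓ ≠ 0, w ℓ * ‖a ℓ‖ ≤ M) : 0 ≤ M := by
  obtain ⟨ℓ, hℓ⟩ := exists_ne (0 : G)
  exact (mul_nonneg (hw.pos hℓ).le (norm_nonneg _)).trans (ha ℓ hℓ)

lemma norm_le [Nontrivial G] (hw : IsConvolutionWeight w g K) (ha0 : a 0 = 0)
    (ha : ∀ ℓ ≠ 0, w ℓ * ‖a ℓ‖ ≤ M) (ℓ : G) : ‖a ℓ‖ ≤ g ℓ * M := by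
  rcases eq_or_ne ℓ 0 with rfl | hℓ
  · simpa [ha0] using mul_nonneg (hw.nonneg 0) (hw.bound_nonneg ha)
  calc ‖a ℓ‖ ≤ g ℓ * w ℓ * ‖a ℓ‖ := le_mul_of_one_le_left (norm_nonneg _) (hw.one_le_mul ℓ hℓ)
    _ = g ℓ * (w ℓ * ‖a ℓ‖) := mul_assoc ..
    _ ≤ g ℓ * M := mul_le_mul_of_nonneg_left (ha ℓ hℓ) (hw.nonneg ℓ)

lemma summable_norm_mul_sub [Nontrivial G] (hw : IsConvolutionWeight w g K)
    (ha0 : a 0 = 0) (hb0 : b 0 = 0) (ha : ∀ ℓ ≠ 0, w ℓ * ‖a ℓ‖ ≤ Ma)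
    (hb : ∀ ℓ ≠ 0, w ℓ * ‖b ℓ‖ ≤ Mb) (k : G) :
    Summable fun ℓ => ‖a ℓ * b (k - ℓ)‖ := by
  have hb_le (m : G) : ‖b m‖ ≤ (∑' ℓ, g ℓ) * Mb :=
    (hw.norm_le hb0 hb m).trans <| mul_le_mul_of_nonneg_right
      (hw.summable.le_tsum m fun ℓ _ => hw.nonneg ℓ) (hw.bound_nonneg hb)
  refine .of_nonneg_of_le (fun _ => norm_nonneg _) (fun ℓ => ?_)
    (hw.summable.mul_right (Ma * ((∑' ℓ, g ℓ) * Mb)))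
  calc ‖a ℓ * b (k - ℓ)‖ ≤ g ℓ * Ma * ((∑' ℓ, g ℓ) * Mb) := by
        rw [norm_mul]
        exact mul_le_mul (hw.norm_le ha0 ha ℓ) (hb_le _) (norm_nonneg _)
          (mul_nonneg (hw.nonneg ℓ) (hw.bound_nonneg ha))
    _ = g ℓ * (Ma * ((∑' ℓ, g ℓ) * Mb)) := mul_assoc ..

lemma mul_norm_mul_sub_le [Nontrivial G] (hw : IsConvolutionWeight w g K)
    (ha0 : a 0 = 0) (hb0 : b 0 = 0) (ha : ∀ ℓ ≠ 0, w ℓ * ‖a ℓ‖ ≤ Ma)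
    (hb : ∀ ℓ ≠ 0, w ℓ * ‖b ℓ‖ ≤ Mb) {k : G} (hk : k ≠ 0) (ℓ : G) :
    w k * ‖a ℓ * b (k - ℓ)‖ ≤ K * (g ℓ + g (k - ℓ)) * (Ma * Mb) := by
  have hK : 0 ≤ K * (g ℓ + g (k - ℓ)) :=
    mul_nonneg hw.const_nonneg (add_nonneg (hw.nonneg _) (hw.nonneg _))
  have hMa := hw.bound_nonneg ha
  have hMb := hw.bound_nonneg hb
  rcases eq_or_ne ℓ 0 with rfl | hℓ
  · simpa [ha0] using mul_nonneg hK (mul_nonneg hMa hMb)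
  rcases eq_or_ne (k - ℓ) 0 with hm | hm
  · simpa [hm, hb0] using mul_nonneg hK (mul_nonneg hMa hMb)
  have hwk := hw.add_le ℓ (k - ℓ) hℓ hm (by rwa [add_sub_cancel])
  rw [add_sub_cancel] at hwk
  calc w k * ‖a ℓ * b (k - ℓ)‖
      ≤ K * (g ℓ + g (k - ℓ)) * (w ℓ * w (k - ℓ)) * (‖a ℓ‖ * ‖b (k - ℓ)‖) := by
        rw [norm_mul]; gcongr
    _ = K * (g ℓ + g (k - ℓ)) * ((w ℓ * ‖a ℓ‖) * (w (k - ℓ) * ‖b (k - ℓ)‖)) := by ring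
    _ ≤ K * (g ℓ + g (k - ℓ)) * (Ma * Mb) := by
        gcongr
        · exact mul_nonneg (hw.pos hm).le (norm_nonneg _)
        · exact ha ℓ hℓ
        · exact hb _ hm

lemma mul_norm_tsum_le [Nontrivial G] (hw : IsConvolutionWeight w g K)
    (ha0 : a 0 = 0) (hb0 : b 0 = 0) (ha : ∀ ℓ ≠ 0, w ℓ * ‖a ℓ‖ ≤ Ma)
    (hb : ∀ ℓ ≠ 0, w ℓ * ‖b ℓ‖ ≤ Mb) {k : G} (hk : k ≠ 0) :
    w k * ‖∑' ℓ, a ℓ * b (k - ℓ)‖ ≤ 2 * K * (∑' ℓ, g ℓ) * Ma * Mb := by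
  have hsum := hw.summable_norm_mul_sub ha0 hb0 ha hb k
  have hg_sub : Summable fun ℓ => g (k - ℓ) := (Equiv.subLeft k).summable_iff.mpr hw.summable
  have htsum_sub : ∑' ℓ, g (k - ℓ) = ∑' ℓ, g ℓ := (Equiv.subLeft k).tsum_eq g
  calc w k * ‖∑' ℓ, a ℓ * b (k - ℓ)‖
      ≤ w k * ∑' ℓ, ‖a ℓ * b (k - ℓ)‖ :=
        mul_le_mul_of_nonneg_left (norm_tsum_le_tsum_norm hsum) (hw.pos hk).le
    _ = ∑' ℓ, w k * ‖a ℓ * b (k - ℓ)‖ := tsum_mul_left.symm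
    _ ≤ ∑' ℓ, K * (g ℓ + g (k - ℓ)) * (Ma * Mb) :=
        (hsum.mul_left _).tsum_le_tsum (hw.mul_norm_mul_sub_le ha0 hb0 ha hb hk)
          (((hw.summable.add hg_sub).mul_left K).mul_right _)
    _ = 2 * K * (∑' ℓ, g ℓ) * Ma * Mb := by
        rw [tsum_mul_right, tsum_mul_left, hw.summable.tsum_add hg_sub, htsum_sub]
        ring

end IsConvolutionWeight

end ConvolutionWeight

lemma summable_norm_intCast_rpow {n : ℕ} {r : ℝ} (hr : r < -n) :
    Summable fun ℓ : Fin n → ℤ =>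
      ‖(WithLp.toLp 2 fun i => (ℓ i : ℝ) : EuclideanSpace ℝ (Fin n))‖ ^ r := by
  have hL := ZLattice.summable_norm_rpow
    (Submodule.span ℤ (Set.range (PiLp.basisFun 2 ℝ (Fin n)))) r
    (by rwa [ZLattice.rank ℝ, finrank_euclideanSpace_fin])
  refine (((PiLp.basisFun 2 ℝ (Fin n)).restrictScalars ℤ).equivFun.symm.toEquiv.summable_iff.mpr
    hL).congr fun ℓ => ?_
  have hcoe : ((((PiLp.basisFun 2 ℝ (Fin n)).restrictScalars ℤ).equivFun.symm ℓ :
      Submodule.span ℤ (Set.range (PiLp.basisFun 2 ℝ (Fin n)))) : EuclideanSpace ℝ (Fin n))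
      = WithLp.toLp 2 fun i => (ℓ i : ℝ) := by
    rw [Module.Basis.equivFun_symm_apply, Submodule.coe_sum]
    ext j
    simp [Module.Basis.restrictScalars_apply, Pi.single_apply]
  simp [← hcoe]

lemma rpow_mul_rpow_neg_le {x y x' y' A B σ α : ℝ} (hx : 0 < x) (hy : 0 < y) (hx' : 0 < x')
    (hy' : 0 < y') (hα : 0 ≤ α) (hασ : α ≤ σ) (hxA : x ≤ A * x') (hxyB : x / y ≤ B * (x' / y')) :
    x ^ σ * y ^ (-α) ≤ A ^ (σ - α) * B ^ α * (x' ^ σ * y' ^ (-α)) := by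
  have hsplit {u v : ℝ} (hu : 0 < u) (hv : 0 < v) :
      u ^ σ * v ^ (-α) = u ^ (σ - α) * (u / v) ^ α := by
    rw [div_rpow hu.le hv.le, rpow_neg hv.le, rpow_sub hu]
    field_simp
  have hA : 0 ≤ A := nonneg_of_mul_nonneg_left (hx.le.trans hxA) hx'
  have hB : 0 ≤ B := nonneg_of_mul_nonneg_left ((div_pos hx hy).le.trans hxyB) (div_pos hx' hy')
  rw [hsplit hx hy, hsplit hx' hy']
  calc x ^ (σ - α) * (x / y) ^ α ≤ (A * x') ^ (σ - α) * (B * (x' / y')) ^ α := by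
        gcongr
    _ = A ^ (σ - α) * B ^ α * (x' ^ (σ - α) * (x' / y') ^ α) := by
        rw [mul_rpow hA hx'.le, mul_rpow hB (div_pos hx' hy').le]; ring

lemma sqrt_one_add_mul_sq_add_le {c : ℝ} (hc : 0 ≤ c) (x y : ℝ) :
    √(1 + c * (x + y) ^ 2) ≤ √(1 + c * x ^ 2) + √(1 + c * y ^ 2) := by
  have hxy : c * x * y ≤ √(1 + c * x ^ 2) * √(1 + c * y ^ 2) := by
    rw [← sqrt_mul (by positivity)]
    apply le_sqrt_of_sq_le
    nlinarith [mul_nonneg hc (sq_nonneg x), mul_nonneg hc (sq_nonneg y)]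
  rw [sqrt_le_left (by positivity)]
  nlinarith [sq_sqrt (by positivity : 0 ≤ 1 + c * x ^ 2),
    sq_sqrt (by positivity : 0 ≤ 1 + c * y ^ 2)]

lemma knorm_eq_norm (k : Fin 3 → ℤ) :
    knorm k = ‖(WithLp.toLp 2 fun i => (k i : ℝ) : EuclideanSpace ℝ (Fin 3))‖ := by
  simp [knorm, EuclideanSpace.norm_eq]

lemma knorm_nonneg (k : Fin 3 → ℤ) : 0 ≤ knorm k := sqrt_nonneg _

lemma one_le_knorm {k : Fin 3 → ℤ} (hk : k ≠ 0) : 1 ≤ knorm k := by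
  obtain ⟨i, hi⟩ := Function.ne_iff.mp hk
  rw [knorm, one_le_sqrt]
  calc (1 : ℝ) ≤ (k i : ℝ) ^ 2 :=
        (one_le_sq_iff_one_le_abs _).mpr (by exact_mod_cast Int.one_le_abs hi)
    _ ≤ ∑ j, (k j : ℝ) ^ 2 :=
        Finset.single_le_sum (fun j _ => sq_nonneg (k j : ℝ)) (Finset.mem_univ i)

lemma knorm_pos {k : Fin 3 → ℤ} (hk : k ≠ 0) : 0 < knorm k := one_pos.trans_le (one_le_knorm hk)

lemma knorm_add_le (ℓ m : Fin 3 → ℤ) : knorm (ℓ + m) ≤ knorm ℓ + knorm m := by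
  simp only [knorm_eq_norm, Pi.add_apply, Int.cast_add]
  exact norm_add_le (WithLp.toLp 2 fun i => (ℓ i : ℝ)) (WithLp.toLp 2 fun i => (m i : ℝ))

lemma summable_knorm_rpow {r : ℝ} (hr : r < -3) : Summable fun k : Fin 3 → ℤ => knorm k ^ r := by
  simp only [knorm_eq_norm]
  exact summable_norm_intCast_rpow (by exact_mod_cast hr)

lemma jb_eq (k : Fin 3 → ℤ) (t : ℝ) : jb k t = √(1 + (1 + t ^ 2) * knorm k ^ 2) := by
  rw [jb, knorm, sq_sqrt (Finset.sum_nonneg fun i _ => sq_nonneg _)]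
  simp only [mul_pow, ← Finset.mul_sum]
  ring_nf

lemma jb_pos (k : Fin 3 → ℤ) (t : ℝ) : 0 < jb k t := by
  rw [jb_eq]; positivity

lemma knorm_le_jb (k : Fin 3 → ℤ) (t : ℝ) : knorm k ≤ jb k t := by
  rw [jb_eq]
  apply le_sqrt_of_sq_le
  nlinarith [sq_nonneg (t * knorm k)]

lemma jb_add_le (ℓ m : Fin 3 → ℤ) (t : ℝ) : jb (ℓ + m) t ≤ jb ℓ t + jb m t := by
  simp only [jb_eq]
  calc √(1 + (1 + t ^ 2) * knorm (ℓ + m) ^ 2)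
      ≤ √(1 + (1 + t ^ 2) * (knorm ℓ + knorm m) ^ 2) := by
        gcongr
        · exact knorm_nonneg _
        · exact knorm_add_le ℓ m
    _ ≤ _ := sqrt_one_add_mul_sq_add_le (by positivity) _ _

lemma sqrt_one_add_sq_le_jb_div_knorm {k : Fin 3 → ℤ} (hk : k ≠ 0) (t : ℝ) :
    √(1 + t ^ 2) ≤ jb k t / knorm k := by
  rw [le_div_iff₀ (knorm_pos hk), jb_eq, ← sqrt_sq (knorm_nonneg k), ← sqrt_mul (by positivity),
    sqrt_sq (knorm_nonneg k)]
  gcongr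
  linarith

lemma jb_div_knorm_le {k : Fin 3 → ℤ} (hk : k ≠ 0) (t : ℝ) :
    jb k t / knorm k ≤ √2 * √(1 + t ^ 2) := by
  have hN : 1 ≤ knorm k ^ 2 := one_le_pow₀ (one_le_knorm hk)
  rw [div_le_iff₀ (knorm_pos hk), jb_eq, ← sqrt_mul zero_le_two, ← sqrt_sq (knorm_nonneg k),
    ← sqrt_mul (by positivity), sqrt_sq (knorm_nonneg k)]
  gcongr
  nlinarith [mul_nonneg (sq_nonneg t) (knorm_nonneg k)]


noncomputable def powerWeight (σ α t : ℝ) (k : Fin 3 → ℤ) : ℝ := jb k t ^ σ * knorm k ^ (-α)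

lemma W_eq_exp_mul_powerWeight (γ σ α z t : ℝ) (k : Fin 3 → ℤ) :
    W γ σ α z t k = exp (z * jb k t ^ γ) * powerWeight σ α t k :=
  mul_assoc ..

lemma powerWeight_nonneg (σ α t : ℝ) (k : Fin 3 → ℤ) : 0 ≤ powerWeight σ α t k :=
  mul_nonneg (rpow_nonneg (jb_pos k t).le _) (rpow_nonneg (knorm_nonneg k) _)

lemma W_nonneg (γ σ α z t : ℝ) (k : Fin 3 → ℤ) : 0 ≤ W γ σ α z t k := by
  rw [W_eq_exp_mul_powerWeight]
  exact mul_nonneg (exp_nonneg _) (powerWeight_nonneg σ α t k)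

lemma exp_mul_jb_rpow_add_le {γ z : ℝ} (hγ0 : 0 ≤ γ) (hγ1 : γ ≤ 1) (hz : 0 ≤ z)
    (ℓ m : Fin 3 → ℤ) (t : ℝ) :
    exp (z * jb (ℓ + m) t ^ γ) ≤ exp (z * jb ℓ t ^ γ) * exp (z * jb m t ^ γ) := by
  rw [← exp_add, ← mul_add, exp_le_exp]
  gcongr
  calc jb (ℓ + m) t ^ γ ≤ (jb ℓ t + jb m t) ^ γ := by
        gcongr
        · exact (jb_pos _ t).le
        · exact jb_add_le ℓ m t
    _ ≤ jb ℓ t ^ γ + jb m t ^ γ := rpow_add_le_add_rpow (jb_pos ℓ t).le (jb_pos m t).le hγ0 hγ1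

lemma powerWeight_add_le {σ α : ℝ} (hα : 0 ≤ α) (hασ : α ≤ σ) {ℓ m : Fin 3 → ℤ}
    (hℓ : ℓ ≠ 0) (hℓm : ℓ + m ≠ 0) {t : ℝ} (hmℓ : jb m t ≤ jb ℓ t) :
    powerWeight σ α t (ℓ + m) ≤ 2 ^ (σ - α) * √2 ^ α * powerWeight σ α t ℓ := by
  refine rpow_mul_rpow_neg_le (jb_pos _ t) (knorm_pos hℓm) (jb_pos ℓ t) (knorm_pos hℓ) hα hασ
    (by linarith [jb_add_le ℓ m t]) ?_
  calc jb (ℓ + m) t / knorm (ℓ + m) ≤ √2 * √(1 + t ^ 2) := jb_div_knorm_le hℓm t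
    _ ≤ √2 * (jb ℓ t / knorm ℓ) := by gcongr; exact sqrt_one_add_sq_le_jb_div_knorm hℓ t

lemma one_le_knorm_rpow_mul_powerWeight {σ α t : ℝ} (hσ : 0 ≤ σ) {k : Fin 3 → ℤ}
    (hk : k ≠ 0) : 1 ≤ knorm k ^ (α - σ) * powerWeight σ α t k := by
  have hN := knorm_pos hk
  calc (1 : ℝ) = knorm k ^ (α - σ) * (knorm k ^ σ * knorm k ^ (-α)) := by
        rw [← rpow_add hN, ← rpow_add hN, show α - σ + (σ + -α) = 0 by ring, rpow_zero]
    _ ≤ knorm k ^ (α - σ) * powerWeight σ α t k := by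
        unfold powerWeight
        gcongr
        exact knorm_le_jb k t

lemma one_le_knorm_rpow_mul_W {γ σ α z t : ℝ} (hσ : 0 ≤ σ) (hz : 0 ≤ z) {k : Fin 3 → ℤ}
    (hk : k ≠ 0) : 1 ≤ knorm k ^ (α - σ) * W γ σ α z t k := by
  have hE : 1 ≤ exp (z * jb k t ^ γ) := one_le_exp (mul_nonneg hz (rpow_nonneg (jb_pos k t).le _))
  calc (1 : ℝ) ≤ exp (z * jb k t ^ γ) * (knorm k ^ (α - σ) * powerWeight σ α t k) :=
        one_le_mul_of_one_le_of_one_le hE (one_le_knorm_rpow_mul_powerWeight hσ hk)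
    _ = knorm k ^ (α - σ) * W γ σ α z t k := by rw [W_eq_exp_mul_powerWeight]; ring

lemma W_add_le_of_jb_le {γ σ α z t : ℝ} (hγ0 : 0 ≤ γ) (hγ1 : γ ≤ 1) (hα : 0 ≤ α)
    (hασ : α ≤ σ) (hz : 0 ≤ z) {ℓ m : Fin 3 → ℤ} (hℓ : ℓ ≠ 0) (hm : m ≠ 0) (hℓm : ℓ + m ≠ 0)
    (hmℓ : jb m t ≤ jb ℓ t) :
    W γ σ α z t (ℓ + m)
      ≤ 2 ^ (σ - α) * √2 ^ α * knorm m ^ (α - σ) * (W γ σ α z t ℓ * W γ σ α z t m) := by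
  have hE := exp_mul_jb_rpow_add_le hγ0 hγ1 hz ℓ m t
  have hP := powerWeight_add_le hα hασ hℓ hℓm hmℓ
  have hPm := one_le_knorm_rpow_mul_powerWeight (α := α) (t := t) (hα.trans hασ) hm
  have hWℓ := W_nonneg γ σ α z t ℓ
  simp only [W_eq_exp_mul_powerWeight] at hWℓ ⊢
  calc exp (z * jb (ℓ + m) t ^ γ) * powerWeight σ α t (ℓ + m)
      ≤ exp (z * jb ℓ t ^ γ) * exp (z * jb m t ^ γ)
          * (2 ^ (σ - α) * √2 ^ α * powerWeight σ α t ℓ) := by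
        gcongr; exact powerWeight_nonneg σ α t _
    _ = 2 ^ (σ - α) * √2 ^ α * (exp (z * jb ℓ t ^ γ) * powerWeight σ α t ℓ)
          * exp (z * jb m t ^ γ) * 1 := by ring
    _ ≤ 2 ^ (σ - α) * √2 ^ α * (exp (z * jb ℓ t ^ γ) * powerWeight σ α t ℓ)
          * exp (z * jb m t ^ γ) * (knorm m ^ (α - σ) * powerWeight σ α t m) := by
        gcongr
    _ = _ := by ring

lemma W_add_le {γ σ α z t : ℝ} (hγ0 : 0 ≤ γ) (hγ1 : γ ≤ 1) (hα : 0 ≤ α) (hασ : α ≤ σ)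
    (hz : 0 ≤ z) {ℓ m : Fin 3 → ℤ} (hℓ : ℓ ≠ 0) (hm : m ≠ 0) (hℓm : ℓ + m ≠ 0) :
    W γ σ α z t (ℓ + m) ≤ 2 ^ (σ - α) * √2 ^ α * (knorm ℓ ^ (α - σ) + knorm m ^ (α - σ))
      * (W γ σ α z t ℓ * W γ σ α z t m) := by
  have hWℓ := W_nonneg γ σ α z t ℓ
  have hWm := W_nonneg γ σ α z t m
  have hgℓ := rpow_nonneg (knorm_nonneg ℓ) (α - σ)
  have hgm := rpow_nonneg (knorm_nonneg m) (α - σ)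
  rcases le_total (jb m t) (jb ℓ t) with hmℓ | hℓm'
  · calc W γ σ α z t (ℓ + m)
        ≤ 2 ^ (σ - α) * √2 ^ α * knorm m ^ (α - σ) * (W γ σ α z t ℓ * W γ σ α z t m) :=
          W_add_le_of_jb_le hγ0 hγ1 hα hασ hz hℓ hm hℓm hmℓ
      _ ≤ _ := by gcongr; linarith
  · calc W γ σ α z t (ℓ + m) = W γ σ α z t (m + ℓ) := by rw [add_comm]
      _ ≤ 2 ^ (σ - α) * √2 ^ α * knorm ℓ ^ (α - σ) * (W γ σ α z t m * W γ σ α z t ℓ) :=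
          W_add_le_of_jb_le hγ0 hγ1 hα hασ hz hm hℓ (by rwa [add_comm]) hℓm'
      _ ≤ _ := by rw [mul_comm (W γ σ α z t m)]; gcongr; linarith

lemma isConvolutionWeight_W {γ σ α z t : ℝ} (hγ0 : 0 ≤ γ) (hγ1 : γ ≤ 1) (hα : 0 ≤ α)
    (hσα : 3 < σ - α) (hz : 0 ≤ z) :
    IsConvolutionWeight (W γ σ α z t) (fun k => knorm k ^ (α - σ)) (2 ^ (σ - α) * √2 ^ α) where
  const_nonneg := by positivity
  nonneg k := rpow_nonneg (knorm_nonneg k) _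
  summable := summable_knorm_rpow (by linarith)
  one_le_mul _ hk := one_le_knorm_rpow_mul_W (by linarith) hz hk
  add_le _ _ hℓ hm hℓm := W_add_le hγ0 hγ1 hα (by linarith) hz hℓ hm hℓm

theorem convolution_estimate_general {γ σ α : ℝ} (hγ0 : 0 < γ) (hγ1 : γ ≤ 1)
    (hα0 : 0 ≤ α) (hσα : 3 < σ - α) :
    ∃ C : ℝ, 0 < C ∧ ∀ z t : ℝ, 0 ≤ z → 0 ≤ t →
      ∀ (a b : (Fin 3 → ℤ) → ℂ) (Ma Mb : ℝ),
        a 0 = 0 → b 0 = 0 →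
        (∀ ℓ : Fin 3 → ℤ, ℓ ≠ 0 → W γ σ α z t ℓ * ‖a ℓ‖ ≤ Ma) →
        (∀ ℓ : Fin 3 → ℤ, ℓ ≠ 0 → W γ σ α z t ℓ * ‖b ℓ‖ ≤ Mb) →
        (∀ k : Fin 3 → ℤ, Summable (fun ℓ : Fin 3 → ℤ => ‖a ℓ * b (k - ℓ)‖)) ∧
        (∀ k : Fin 3 → ℤ, k ≠ 0 →
          W γ σ α z t k * ‖∑' ℓ : Fin 3 → ℤ, a ℓ * b (k - ℓ)‖ ≤ C * Ma * Mb) := by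
  have hS : 0 < ∑' k : Fin 3 → ℤ, knorm k ^ (α - σ) :=
    (summable_knorm_rpow (by linarith)).tsum_pos (fun k => rpow_nonneg (knorm_nonneg k) _)
      (Pi.single 0 1) (rpow_pos_of_pos (knorm_pos (by simp)) _)
  refine ⟨2 * (2 ^ (σ - α) * √2 ^ α) * ∑' k : Fin 3 → ℤ, knorm k ^ (α - σ), by positivity, ?_⟩
  intro z t hz _ a b Ma Mb ha0 hb0 ha hb
  have hW := isConvolutionWeight_W (t := t) hγ0.le hγ1 hα0 hσα hz
  exact ⟨hW.summable_norm_mul_sub ha0 hb0 ha hb, fun k hk => hW.mul_norm_tsum_le ha0 hb0 ha hb hk⟩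

/-- Convolution estimate for the generator function `F`:
`F[φψ](t,z) ≤ C · F[φ](t,z) · F[ψ](t,z)` at the level of Fourier coefficients. -/
theorem convolution_estimate {γ σ α : ℝ} (hγ0 : 0 < γ) (hγ1 : γ ≤ 1)
    (hσ : 3 < σ) (hα0 : 0 ≤ α) (hα : α < 1 / 2) (hσα : 3 < σ - α) :
    ∃ C : ℝ, 0 < C ∧ ∀ z t : ℝ, 0 ≤ z → 0 ≤ t →
      ∀ (a b : (Fin 3 → ℤ) → ℂ) (Ma Mb : ℝ),
        a 0 = 0 → b 0 = 0 →
        (∀ ℓ : Fin 3 → ℤ, ℓ ≠ 0 → W γ σ α z t ℓ * ‖a ℓ‖ ≤ Ma) →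
        (∀ ℓ : Fin 3 → ℤ, ℓ ≠ 0 → W γ σ α z t ℓ * ‖b ℓ‖ ≤ Mb) →
        (∀ k : Fin 3 → ℤ, Summable (fun ℓ : Fin 3 → ℤ => ‖a ℓ * b (k - ℓ)‖)) ∧
        (∀ k : Fin 3 → ℤ, k ≠ 0 →
          W γ σ α z t k * ‖∑' ℓ : Fin 3 → ℤ, a ℓ * b (k - ℓ)‖ ≤ C * Ma * Mb) :=
  convolution_estimate_general hγ0 hγ1 hα0 hσα
end

section
/- Let γ ∈ (0,1], σ > 0, λ₁ > 0 and j ∈ ℕ. There exists a constant C > 0, depending only on j, γ, σ and λ₁, such that for every z ∈ [0, λ₁], every k ∈ ℤ³ and every η ∈ ℝ³, the j-th iterated Fréchet derivative of the smooth map η ↦ exp(z⟨k,η⟩^γ)·⟨k,η⟩^σ satisfies ‖D^j_η (exp(z⟨k,η⟩^γ)·⟨k,η⟩^σ)‖ ≤ C·⟨k,η⟩^{−j(1−γ)}·exp(z⟨k,η⟩^γ)·⟨k,η⟩^σ, and in particular this is at most C·exp(z⟨k,η⟩^γ)·⟨k,η⟩^σ. -/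
/-!
Write `⟨x⟩ = √(c + ‖x‖²)`. The homogeneity `⟨μ • x⟩_c = μ ⟨x⟩_{c/μ²}` reduces the symbol estimate
`‖Dⁱ(⟨·⟩^p)(x)‖ ≲ ⟨x⟩^(p-i)` to points where the bracket equals `1`; there Faà di Bruno's formula
for `t ↦ t^(p/2)` composed with `y ↦ c + ‖y‖²` gives a constant depending only on `p` and `i`.
Consequently, when `⟨x⟩ ≥ 1`, the `i`-th derivative of the exponent `z ⟨·⟩^γ` at `x` is at most `rⁱ`
with `r = D ⟨x⟩^(γ-1)`, so by Faà di Bruno that of `exp (z ⟨·⟩^γ)` is `≲ exp (z ⟨x⟩^γ) rⁱ`, while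
that of `⟨·⟩^σ` is `≲ ⟨x⟩^σ rⁱ` since `⟨x⟩⁻¹ ≤ r`. Leibniz's rule then bounds the `j`-th derivative
of the weight by the weight times `rʲ ∼ ⟨x⟩^(-j(1-γ))`.
-/

open Finset
open scoped ContDiff Nat

/-- Japanese bracket `⟨k, η⟩ = √(1 + |k|² + |η|²)` for `k ∈ ℤ³`, `η ∈ ℝ³`. -/
noncomputable def jbe (k : Fin 3 → ℤ) (η : EuclideanSpace ℝ (Fin 3)) : ℝ :=
  Real.sqrt (1 + (∑ i, ((k i : ℝ)) ^ 2) + ‖η‖ ^ 2)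

theorem rpow_sub_natCast_le_mul_pow {b D γ : ℝ} (hb : 1 ≤ b) (hD : 1 ≤ D) (hγ : 0 ≤ γ) (p : ℝ)
    (i : ℕ) : b ^ (p - i) ≤ b ^ p * (D * b ^ (γ - 1)) ^ i := by
  rw [Real.rpow_sub_natCast (by positivity), div_eq_mul_inv, ← inv_pow]
  gcongr
  calc b⁻¹ = b ^ (-1 : ℝ) := (Real.rpow_neg_one b).symm
    _ ≤ b ^ (γ - 1) := Real.rpow_le_rpow_of_exponent_le hb (by linarith)
    _ ≤ D * b ^ (γ - 1) := le_mul_of_one_le_left (by positivity) hD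

section IteratedFDeriv

variable {𝕜 : Type*} [NontriviallyNormedField 𝕜] {H E F G : Type*}
  [NormedAddCommGroup H] [NormedSpace 𝕜 H] [NormedAddCommGroup E] [NormedSpace 𝕜 E]
  [NormedAddCommGroup F] [NormedSpace 𝕜 F] [NormedAddCommGroup G] [NormedSpace 𝕜 G]

theorem iteratedFDeriv_const_add {n : ℕ} (hn : n ≠ 0) (c : F) (f : E → F) :
    iteratedFDeriv 𝕜 n (fun y => c + f y) = iteratedFDeriv 𝕜 n f := by
  obtain ⟨m, rfl⟩ := Nat.exists_eq_succ_of_ne_zero hn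
  ext1 x
  simp only [iteratedFDeriv_succ_eq_comp_right, fderiv_const_add]

theorem norm_iteratedFDeriv_id_le_one {x : E} (hx : ‖x‖ ≤ 1) :
    ∀ n, ‖iteratedFDeriv 𝕜 n (id : E → E) x‖ ≤ 1
  | 0 => by simpa [norm_iteratedFDeriv_zero] using hx
  | 1 => by
    rw [norm_iteratedFDeriv_one, fderiv_id]
    exact ContinuousLinearMap.norm_id_le
  | n + 2 => by
    have hfderiv : fderiv 𝕜 (id : E → E) = fun _ => ContinuousLinearMap.id 𝕜 E :=
      funext fun _ => fderiv_id
    rw [← norm_iteratedFDeriv_fderiv, hfderiv, iteratedFDeriv_const_of_ne n.succ_ne_zero]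
    simp

theorem norm_iteratedFDeriv_comp_const_smul {n : ℕ} {f : E → F} (hf : ContDiff 𝕜 n f) (μ : 𝕜)
    (x : E) :
    ‖iteratedFDeriv 𝕜 n (fun y => f (μ • y)) x‖ = ‖μ‖ ^ n * ‖iteratedFDeriv 𝕜 n f (μ • x)‖ := by
  rw [iteratedFDeriv_comp_const_smul μ hf, norm_smul, norm_pow]

theorem ContinuousLinearMap.norm_iteratedFDeriv_le_of_bilinear_of_geometric
    (B : E →L[𝕜] F →L[𝕜] G) (hB : ‖B‖ ≤ 1) {f : H → E} {g : H → F} {N : ℕ∞ω}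
    (hf : ContDiff 𝕜 N f) (hg : ContDiff 𝕜 N g) {x : H} {n : ℕ} (hn : n ≤ N) {a b r : ℝ}
    (hfx : ∀ i ≤ n, ‖iteratedFDeriv 𝕜 i f x‖ ≤ a * r ^ i)
    (hgx : ∀ i ≤ n, ‖iteratedFDeriv 𝕜 i g x‖ ≤ b * r ^ i) :
    ‖iteratedFDeriv 𝕜 n (fun y => B (f y) (g y)) x‖ ≤ 2 ^ n * a * b * r ^ n := by
  have hsplit : ∀ i ∈ range (n + 1), (n.choose i : ℝ) * (a * r ^ i) * (b * r ^ (n - i)) =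
      n.choose i * (a * b * r ^ n) := fun i hi => by
    rw [← pow_mul_pow_sub r (by grind : i ≤ n)]
    ring
  calc _ ≤ ∑ i ∈ range (n + 1),
        (n.choose i : ℝ) * ‖iteratedFDeriv 𝕜 i f x‖ * ‖iteratedFDeriv 𝕜 (n - i) g x‖ :=
        B.norm_iteratedFDeriv_le_of_bilinear_of_le_one hf hg x hn hB
    _ ≤ ∑ i ∈ range (n + 1), (n.choose i : ℝ) * (a * r ^ i) * (b * r ^ (n - i)) := by
        gcongr with i hi
        · exact mul_nonneg (Nat.cast_nonneg _) ((norm_nonneg _).trans (hfx i (by grind)))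
        · exact hfx i (by grind)
        · exact hgx (n - i) (by grind)
    _ = 2 ^ n * a * b * r ^ n := by
        rw [sum_congr rfl hsplit, ← sum_mul, ← Nat.cast_sum, Nat.sum_range_choose]
        push_cast
        ring

theorem norm_iteratedFDeriv_mul_le_of_geometric {f g : H → 𝕜} {N : ℕ∞ω}
    (hf : ContDiff 𝕜 N f) (hg : ContDiff 𝕜 N g) {x : H} {n : ℕ} (hn : n ≤ N) {a b r : ℝ}
    (hfx : ∀ i ≤ n, ‖iteratedFDeriv 𝕜 i f x‖ ≤ a * r ^ i)
    (hgx : ∀ i ≤ n, ‖iteratedFDeriv 𝕜 i g x‖ ≤ b * r ^ i) :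
    ‖iteratedFDeriv 𝕜 n (fun y => f y * g y) x‖ ≤ 2 ^ n * a * b * r ^ n :=
  (ContinuousLinearMap.mul 𝕜 𝕜).norm_iteratedFDeriv_le_of_bilinear_of_geometric
    (ContinuousLinearMap.opNorm_mul_le _ _) hf hg hn hfx hgx

end IteratedFDeriv

theorem norm_iteratedFDeriv_exp_mul_le_of_symbol {E : Type*} [NormedAddCommGroup E]
    [NormedSpace ℝ E] {f : E → ℝ} (hf : ContDiff ℝ ∞ f) {x : E} {n : ℕ} {b C D γ z : ℝ}
    (hb : 1 ≤ b) (hγ : 0 ≤ γ) (hz : 0 ≤ z) (hD : 1 ≤ D) (hzC : z * C ≤ D)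
    (hfx : ∀ i ≤ n, ‖iteratedFDeriv ℝ i f x‖ ≤ C * b ^ (γ - i)) {i : ℕ} (hi : i ≤ n) :
    ‖iteratedFDeriv ℝ i (fun y => Real.exp (z * f y)) x‖ ≤
      n ! * Real.exp (z * f x) * (D * b ^ (γ - 1)) ^ i := by
  have houter : ∀ l ≤ i, ‖iteratedFDeriv ℝ l Real.exp (z * f x)‖ ≤ Real.exp (z * f x) := by
    intro l _
    rw [norm_iteratedFDeriv_eq_norm_iteratedDeriv, iteratedDeriv_eq_iterate, Real.iter_deriv_exp,
      Real.norm_of_nonneg (Real.exp_pos _).le]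
  have hinner : ∀ l, 1 ≤ l → l ≤ i →
      ‖iteratedFDeriv ℝ l (fun y => z * f y) x‖ ≤ (D * b ^ (γ - 1)) ^ l := by
    intro l hl hli
    have hexponent : b ^ (γ - l) ≤ (b ^ (γ - 1)) ^ l := by
      rw [← Real.rpow_mul_natCast (by linarith)]
      refine Real.rpow_le_rpow_of_exponent_le hb ?_
      have : (1 : ℝ) ≤ l := by exact_mod_cast hl
      nlinarith
    calc ‖iteratedFDeriv ℝ l (fun y => z * f y) x‖ = z * ‖iteratedFDeriv ℝ l f x‖ := by
          rw [show (fun y => z * f y) = fun y => z • f y from rfl,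
            iteratedFDeriv_const_smul_apply' (hf.contDiffAt.of_le (by exact_mod_cast le_top)),
            norm_smul, Real.norm_of_nonneg hz]
      _ ≤ z * C * b ^ (γ - l) := by
          rw [mul_assoc]
          exact mul_le_mul_of_nonneg_left (hfx l (hli.trans hi)) hz
      _ ≤ D ^ l * (b ^ (γ - 1)) ^ l :=
          mul_le_mul (hzC.trans (le_self_pow₀ hD (by omega))) hexponent (by positivity)
            (by positivity)
      _ = (D * b ^ (γ - 1)) ^ l := (mul_pow _ _ _).symm
  calc _ ≤ i ! * Real.exp (z * f x) * (D * b ^ (γ - 1)) ^ i :=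
        norm_iteratedFDeriv_comp_le Real.contDiff_exp (contDiff_const.mul hf)
          (by exact_mod_cast le_top) x houter hinner
    _ ≤ n ! * Real.exp (z * f x) * (D * b ^ (γ - 1)) ^ i := by gcongr

section JapaneseBracket

variable {E : Type*} [NormedAddCommGroup E] {c : ℝ}

noncomputable def japaneseBracket (c : ℝ) (x : E) : ℝ := √(c + ‖x‖ ^ 2)

theorem japaneseBracket_pos (hc : 0 < c) (x : E) : 0 < japaneseBracket c x :=
  Real.sqrt_pos.2 (by positivity)

theorem one_le_japaneseBracket (hc : 1 ≤ c) (x : E) : 1 ≤ japaneseBracket c x :=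
  Real.one_le_sqrt.2 (by nlinarith [sq_nonneg ‖x‖])

theorem japaneseBracket_rpow (hc : 0 ≤ c) (x : E) (p : ℝ) :
    japaneseBracket c x ^ p = (c + ‖x‖ ^ 2) ^ (p / 2) := by
  rw [japaneseBracket, Real.sqrt_eq_rpow, ← Real.rpow_mul (by positivity)]
  ring_nf

variable [InnerProductSpace ℝ E]

theorem japaneseBracket_smul {μ : ℝ} (hμ : 0 < μ) (x : E) :
    japaneseBracket c (μ • x) = μ * japaneseBracket (c / μ ^ 2) x := by
  rw [japaneseBracket, japaneseBracket, norm_smul, Real.norm_of_nonneg hμ.le,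
    ← Real.sqrt_sq hμ.le, ← Real.sqrt_mul (by positivity), Real.sqrt_sq hμ.le]
  congr 1
  field_simp

theorem contDiff_japaneseBracket_rpow (hc : 0 < c) (p : ℝ) :
    ContDiff ℝ ∞ fun x : E => japaneseBracket c x ^ p :=
  ((contDiff_const.add (contDiff_norm_sq ℝ)).sqrt fun x => by positivity).rpow_const_of_ne
    fun x => (japaneseBracket_pos hc x).ne'

theorem norm_iteratedFDeriv_norm_sq_le {x : E} (hx : ‖x‖ ≤ 1) (n : ℕ) :
    ‖iteratedFDeriv ℝ n (fun y : E => ‖y‖ ^ 2) x‖ ≤ 2 ^ n := by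
  have hid := norm_iteratedFDeriv_id_le_one (𝕜 := ℝ) hx
  have hsq : (fun y : E => ‖y‖ ^ 2) = fun y => innerSL ℝ (id y) (id y) :=
    funext fun y => (real_inner_self_eq_norm_sq y).symm
  rw [hsq]
  have h := (innerSL ℝ (E := E)).norm_iteratedFDeriv_le_of_bilinear_of_geometric
    (norm_innerSL_le ℝ) contDiff_id contDiff_id (N := ∞) (n := n) (by exact_mod_cast le_top)
    (a := 1) (b := 1) (r := 1) (fun i _ => by simpa using hid i) (fun i _ => by simpa using hid i)
  simpa only [mul_one, one_pow] using h

theorem norm_iteratedFDeriv_rpow_add_norm_sq_le {a : E} (hc : 0 < c) (ha : c + ‖a‖ ^ 2 = 1)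
    (q : ℝ) {n i : ℕ} (hi : i ≤ n) :
    ‖iteratedFDeriv ℝ i (fun y : E => (c + ‖y‖ ^ 2) ^ q) a‖ ≤ n ! * (|q| + n + 1) ^ n * 2 ^ n := by
  have hbase : 1 ≤ |q| + n + 1 := by
    have := abs_nonneg q
    linarith [(n.cast_nonneg : (0 : ℝ) ≤ n)]
  have houter : ∀ l ≤ i, ‖iteratedFDerivWithin ℝ l (fun t : ℝ => t ^ q) (Set.Ioi 0)
      (c + ‖a‖ ^ 2)‖ ≤ (|q| + n + 1) ^ n := by
    intro l hl
    rw [ha, iteratedFDerivWithin_of_isOpen l isOpen_Ioi (Set.mem_Ioi.2 one_pos),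
      norm_iteratedFDeriv_eq_norm_iteratedDeriv, iteratedDeriv_eq_iterate,
      Real.iter_deriv_rpow_const, descPochhammer_eval_eq_prod_range, Real.one_rpow, mul_one,
      norm_prod]
    calc ∏ j ∈ range l, ‖q - j‖ ≤ ∏ _j ∈ range l, (|q| + n + 1) := by
          refine prod_le_prod (fun _ _ => norm_nonneg _) fun j hj => ?_
          have : (j : ℝ) ≤ n := by exact_mod_cast (mem_range.1 hj).le.trans (hl.trans hi)
          simpa using (abs_sub q j).trans (by simp; linarith)
      _ ≤ (|q| + n + 1) ^ n := by
          rw [prod_const, card_range]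
          exact pow_le_pow_right₀ hbase (hl.trans hi)
  have hinner : ∀ l, 1 ≤ l → l ≤ i →
      ‖iteratedFDeriv ℝ l (fun y : E => c + ‖y‖ ^ 2) a‖ ≤ 2 ^ l := fun l hl _ => by
    rw [iteratedFDeriv_const_add (by omega)]
    exact norm_iteratedFDeriv_norm_sq_le (by nlinarith [norm_nonneg a]) l
  calc _ ≤ i ! * (|q| + n + 1) ^ n * 2 ^ i :=
        norm_iteratedFDeriv_comp_le' (g := fun t : ℝ => t ^ q)
          (by rintro _ ⟨y, rfl⟩; exact Set.mem_Ioi.2 (by positivity)) isOpen_Ioi.uniqueDiffOn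
          (fun t ht => (Real.contDiffAt_rpow_const_of_ne ht.ne').contDiffWithinAt)
          (contDiff_const.add (contDiff_norm_sq ℝ)) (N := ∞) (by exact_mod_cast le_top) a
          houter hinner
    _ ≤ n ! * (|q| + n + 1) ^ n * 2 ^ n := by
        gcongr
        norm_num
theorem norm_iteratedFDeriv_japaneseBracket_rpow_le (hc : 0 < c) (p : ℝ) {n i : ℕ} (hi : i ≤ n)
    (x : E) :
    ‖iteratedFDeriv ℝ i (fun y => japaneseBracket c y ^ p) x‖ ≤
      n ! * (|p / 2| + n + 1) ^ n * 2 ^ n * japaneseBracket c x ^ (p - i) := by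
  set b := japaneseBracket c x
  have hb : 0 < b := japaneseBracket_pos hc x
  have hc' : 0 < c / b ^ 2 := by positivity
  have ha : c / b ^ 2 + ‖b⁻¹ • x‖ ^ 2 = 1 := by
    have hb2 : b ^ 2 = c + ‖x‖ ^ 2 := Real.sq_sqrt (by positivity)
    rw [norm_smul, Real.norm_of_nonneg (inv_pos.2 hb).le]
    field_simp
    linarith
  have hhom : (fun y : E => japaneseBracket c (b • y) ^ p) =
      fun y => b ^ p • japaneseBracket (c / b ^ 2) y ^ p := by
    funext y
    rw [japaneseBracket_smul hb, Real.mul_rpow hb.le (japaneseBracket_pos hc' y).le, smul_eq_mul]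
  have hnorm : b ^ i * ‖iteratedFDeriv ℝ i (fun y => japaneseBracket c y ^ p) x‖ =
      b ^ p * ‖iteratedFDeriv ℝ i (fun y => japaneseBracket (c / b ^ 2) y ^ p) (b⁻¹ • x)‖ := by
    have h := norm_iteratedFDeriv_comp_const_smul (n := i)
      ((contDiff_japaneseBracket_rpow hc p).of_le (by exact_mod_cast le_top)) b (b⁻¹ • x)
    rw [hhom, smul_inv_smul₀ hb.ne', iteratedFDeriv_const_smul_apply'
      ((contDiff_japaneseBracket_rpow hc' p).contDiffAt.of_le (by exact_mod_cast le_top)),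
      norm_smul, Real.norm_of_nonneg hb.le, Real.norm_of_nonneg (by positivity)] at h
    exact h.symm
  have hunit := norm_iteratedFDeriv_rpow_add_norm_sq_le hc' ha (p / 2) hi
  simp only [← japaneseBracket_rpow hc'.le] at hunit
  rw [Real.rpow_sub_natCast hb.ne']
  calc _ = b ^ p * ‖iteratedFDeriv ℝ i (fun y => japaneseBracket (c / b ^ 2) y ^ p) (b⁻¹ • x)‖
        / b ^ i := by rw [← hnorm, mul_div_cancel_left₀ _ (by positivity)]
    _ ≤ b ^ p * (n ! * (|p / 2| + n + 1) ^ n * 2 ^ n) / b ^ i := by gcongr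
    _ = _ := by ring

end JapaneseBracket

theorem weight_derivative_bound_general {γ σ lam₁ : ℝ} (j : ℕ) (hγ0 : 0 < γ) (hγ1 : γ ≤ 1) :
    ∃ C : ℝ, 0 < C ∧ ∀ z : ℝ, 0 ≤ z → z ≤ lam₁ →
      ∀ (k : Fin 3 → ℤ) (η : EuclideanSpace ℝ (Fin 3)),
        ‖iteratedFDeriv ℝ j
            (fun η' : EuclideanSpace ℝ (Fin 3) =>
              Real.exp (z * jbe k η' ^ γ) * jbe k η' ^ σ) η‖ ≤
          C * jbe k η ^ (-((j : ℝ) * (1 - γ))) *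
            (Real.exp (z * jbe k η ^ γ) * jbe k η ^ σ) ∧
        ‖iteratedFDeriv ℝ j
            (fun η' : EuclideanSpace ℝ (Fin 3) =>
              Real.exp (z * jbe k η' ^ γ) * jbe k η' ^ σ) η‖ ≤
          C * (Real.exp (z * jbe k η ^ γ) * jbe k η ^ σ) := by
  set Cσ : ℝ := j ! * (|σ / 2| + j + 1) ^ j * 2 ^ j
  set D : ℝ := max (lam₁ * (j ! * (|γ / 2| + j + 1) ^ j * 2 ^ j)) 1
  have hD : 1 ≤ D := le_max_right _ _
  refine ⟨2 ^ j * j ! * Cσ * D ^ j, by positivity, fun z hz0 hzL k η => ?_⟩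
  set c : ℝ := 1 + ∑ i, (k i : ℝ) ^ 2
  have hc : 1 ≤ c := le_add_of_nonneg_right (sum_nonneg fun i _ => sq_nonneg _)
  have hc0 : 0 < c := by linarith
  simp only [show jbe k = japaneseBracket c from rfl]
  set b := japaneseBracket c η
  have hb : 1 ≤ b := one_le_japaneseBracket hc η
  have hexp : ∀ i ≤ j, ‖iteratedFDeriv ℝ i (fun y => Real.exp (z * japaneseBracket c y ^ γ)) η‖ ≤
      j ! * Real.exp (z * b ^ γ) * (D * b ^ (γ - 1)) ^ i := fun i hi =>
    norm_iteratedFDeriv_exp_mul_le_of_symbol (contDiff_japaneseBracket_rpow hc0 γ) hb hγ0.le hz0 hD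
      ((mul_le_mul_of_nonneg_right hzL (by positivity)).trans (le_max_left _ _))
      (fun i' hi' => norm_iteratedFDeriv_japaneseBracket_rpow_le hc0 γ hi' η) hi
  have hpow : ∀ i ≤ j, ‖iteratedFDeriv ℝ i (fun y => japaneseBracket c y ^ σ) η‖ ≤
      Cσ * b ^ σ * (D * b ^ (γ - 1)) ^ i := fun i hi =>
    calc _ ≤ Cσ * b ^ (σ - i) := norm_iteratedFDeriv_japaneseBracket_rpow_le hc0 σ hi η
      _ ≤ Cσ * (b ^ σ * (D * b ^ (γ - 1)) ^ i) := by
          gcongr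
          exact rpow_sub_natCast_le_mul_pow hb hD hγ0.le σ i
      _ = _ := (mul_assoc _ _ _).symm
  have hprod := norm_iteratedFDeriv_mul_le_of_geometric
    (Real.contDiff_exp.comp (contDiff_const.mul (contDiff_japaneseBracket_rpow hc0 γ)))
    (contDiff_japaneseBracket_rpow hc0 σ) (by exact_mod_cast le_top) hexp hpow
  have hdecay : (D * b ^ (γ - 1)) ^ j = D ^ j * b ^ (-((j : ℝ) * (1 - γ))) := by
    rw [mul_pow, ← Real.rpow_mul_natCast (by linarith)]
    ring_nf
  have hdecay_le_one : b ^ (-((j : ℝ) * (1 - γ))) ≤ 1 :=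
    Real.rpow_le_one_of_one_le_of_nonpos hb (by nlinarith [(j.cast_nonneg : (0 : ℝ) ≤ j)])
  rw [hdecay] at hprod
  refine ⟨hprod.trans_eq (by ring), hprod.trans ?_⟩
  calc _ ≤ 2 ^ j * (j ! * Real.exp (z * b ^ γ)) * (Cσ * b ^ σ) * (D ^ j * 1) := by gcongr
    _ = _ := by ring

/-- Derivative bound on the Fourier weight `A_{k,η} = e^{z⟨k,η⟩^γ}⟨k,η⟩^σ`:
`‖D^j_η A_{k,η}‖ ≤ C·⟨k,η⟩^{−j(1−γ)}·A_{k,η} ≤ C·A_{k,η}`. -/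
theorem weight_derivative_bound {γ σ lam₁ : ℝ} (j : ℕ) (hγ0 : 0 < γ) (hγ1 : γ ≤ 1)
    (hσ : 0 < σ) (hlam : 0 < lam₁) :
    ∃ C : ℝ, 0 < C ∧ ∀ z : ℝ, 0 ≤ z → z ≤ lam₁ →
      ∀ (k : Fin 3 → ℤ) (η : EuclideanSpace ℝ (Fin 3)),
        ‖iteratedFDeriv ℝ j
            (fun η' : EuclideanSpace ℝ (Fin 3) =>
              Real.exp (z * jbe k η' ^ γ) * jbe k η' ^ σ) η‖ ≤
          C * jbe k η ^ (-((j : ℝ) * (1 - γ))) *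
            (Real.exp (z * jbe k η ^ γ) * jbe k η ^ σ) ∧
        ‖iteratedFDeriv ℝ j
            (fun η' : EuclideanSpace ℝ (Fin 3) =>
              Real.exp (z * jbe k η' ^ γ) * jbe k η' ^ σ) η‖ ≤
          C * (Real.exp (z * jbe k η ^ γ) * jbe k η ^ σ) :=
  weight_derivative_bound_general j hγ0 hγ1
end

section
/- Let γ ∈ (0,1] and θ₁ > 0. For every z ∈ [0, θ₁/2], every k ∈ ℤ³ and all 0 ≤ s ≤ t, one has exp(z⟨k,kt⟩^γ)·exp(−(θ₁/2)·|k|·(t−s)) ≤ exp(z⟨k,ks⟩^γ). -/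
lemma rpow_sub_le_sub {γ : ℝ} (hγ0 : 0 < γ) (hγ1 : γ ≤ 1) {a b : ℝ}
    (hb : 1 ≤ b) (hab : b ≤ a) : a ^ γ ≤ b ^ γ + (a - b) := by
  have ha : (1:ℝ) ≤ a := hb.trans hab
  have ha0 : (0:ℝ) < a := lt_of_lt_of_le one_pos ha
  have hb0 : (0:ℝ) < b := lt_of_lt_of_le one_pos hb
  have h1 : a ^ γ = a ^ (γ - 1) * a := by
    rw [show γ = (γ - 1) + 1 by ring, Real.rpow_add_one ha0.ne']
    ring_nf
  have h2 : b ^ γ = b ^ (γ - 1) * b := by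
    rw [show γ = (γ - 1) + 1 by ring, Real.rpow_add_one hb0.ne']
    ring_nf
  have h3 : a ^ (γ - 1) ≤ b ^ (γ - 1) :=
    Real.rpow_le_rpow_of_nonpos hb0 hab (by linarith)
  have h4 : b ^ (γ - 1) ≤ 1 := Real.rpow_le_one_of_one_le_of_nonpos hb (by linarith)
  have h5 : (0:ℝ) ≤ b ^ (γ - 1) := Real.rpow_nonneg hb0.le _
  nlinarith [mul_le_mul_of_nonneg_right h3 ha0.le]

lemma sqrt_lip {c a b : ℝ} (hc : 0 ≤ c) (hb : 0 ≤ b) (hab : b ≤ a) :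
    Real.sqrt (c + a ^ 2) ≤ Real.sqrt (c + b ^ 2) + (a - b) := by
  have h1 : Real.sqrt (c + b ^ 2) ^ 2 = c + b ^ 2 := Real.sq_sqrt (by positivity)
  have h2 : b ≤ Real.sqrt (c + b ^ 2) := by
    nlinarith [Real.sqrt_nonneg (c + b ^ 2)]
  have h3 : (0:ℝ) ≤ Real.sqrt (c + b ^ 2) + (a - b) := by
    nlinarith [Real.sqrt_nonneg (c + b ^ 2)]
  have := Real.sqrt_le_sqrt (show c + a ^ 2 ≤ (Real.sqrt (c + b ^ 2) + (a - b)) ^ 2 by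
    nlinarith)
  rwa [Real.sqrt_sq h3] at this

/-- Exponential-weight exchange inequality:
`e^{z⟨k,kt⟩^γ}·e^{−(θ₁/2)|k|(t−s)} ≤ e^{z⟨k,ks⟩^γ}` for `z ∈ [0, θ₁/2]`. -/
theorem exp_weight_exchange {γ θ₁ : ℝ} (hγ0 : 0 < γ) (hγ1 : γ ≤ 1) (hθ : 0 < θ₁) :
    ∀ z : ℝ, 0 ≤ z → z ≤ θ₁ / 2 → ∀ (k : Fin 3 → ℤ) (s t : ℝ), 0 ≤ s → s ≤ t →
      Real.exp (z * jb k t ^ γ) * Real.exp (-(θ₁ / 2) * knorm k * (t - s)) ≤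
        Real.exp (z * jb k s ^ γ) := by
  intro z hz0 hz k s t hs hst
  set S : ℝ := ∑ i, ((k i : ℝ)) ^ 2 with hS
  have hS0 : 0 ≤ S := Finset.sum_nonneg fun i _ => sq_nonneg _
  have hK : knorm k ^ 2 = S := Real.sq_sqrt hS0
  have hK0 : 0 ≤ knorm k := Real.sqrt_nonneg _
  have hjb : ∀ u : ℝ, jb k u = Real.sqrt ((1 + S) + (u * knorm k) ^ 2) := by
    intro u
    have : (∑ i, (u * (k i : ℝ)) ^ 2) = u ^ 2 * S := by
      rw [Finset.mul_sum]; exact Finset.sum_congr rfl fun i _ => by ring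
    rw [jb, this]
    congr 1
    rw [mul_pow, hK]
  have hjb1 : ∀ u : ℝ, 1 ≤ jb k u := by
    intro u
    rw [hjb]
    have h := Real.sqrt_le_sqrt (show (1:ℝ) ≤ (1 + S) + (u * knorm k) ^ 2 by
      nlinarith [sq_nonneg (u * knorm k)])
    simpa using h
  have hmono : jb k s ≤ jb k t := by
    rw [hjb, hjb]
    exact Real.sqrt_le_sqrt (by nlinarith [mul_le_mul_of_nonneg_right hst hK0, mul_nonneg hs hK0])
  have hlip : jb k t ≤ jb k s + knorm k * (t - s) := by
    rw [hjb, hjb]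
    have := sqrt_lip (c := 1 + S) (a := t * knorm k) (b := s * knorm k)
      (by linarith) (mul_nonneg hs hK0) (mul_le_mul_of_nonneg_right hst hK0)
    calc Real.sqrt ((1 + S) + (t * knorm k) ^ 2)
        ≤ Real.sqrt ((1 + S) + (s * knorm k) ^ 2) + (t * knorm k - s * knorm k) := this
      _ = Real.sqrt ((1 + S) + (s * knorm k) ^ 2) + knorm k * (t - s) := by ring
  have hpow : jb k t ^ γ ≤ jb k s ^ γ + knorm k * (t - s) := by
    have := rpow_sub_le_sub hγ0 hγ1 (hjb1 s) hmono
    linarith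
  rw [← Real.exp_add]
  apply Real.exp_le_exp.mpr
  have h1 : z * jb k t ^ γ ≤ z * jb k s ^ γ + z * (knorm k * (t - s)) := by
    nlinarith
  have h2 : z * (knorm k * (t - s)) ≤ θ₁ / 2 * (knorm k * (t - s)) :=
    mul_le_mul_of_nonneg_right hz (mul_nonneg hK0 (by linarith))
  nlinarith
end

section
/- Let λ₁ > 0, θ₁ > 0 and γ ∈ (0,1], and set ν := min{θ₁/8, λ₁/4}. There exists a constant C > 0, depending only on λ₁, θ₁ and γ, such that for every t ≥ 0, ∫₀^t exp(−(θ₁/4)·(t−s))·exp(−(λ₁/2)·(1+s²)^{γ/2}) ds ≤ C·exp(−ν·t^γ). -/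
/-!
For `0 ≤ γ ≤ 1` the map `x ↦ x ^ γ` is subadditive, so for `0 ≤ s ≤ t`
`t ^ γ ≤ (t - s) ^ γ + s ^ γ ≤ 1 + (t - s) + ⟨s⟩ ^ γ`.
Hence `ν t ^ γ` is paid for by half of the kernel's rate `θ₁ / 4` and by the weight
`(λ₁ / 2) ⟨s⟩ ^ γ`, at the price of a factor `e ^ ν`; what is left of the kernel,
`e ^ {-θ₁ (t - s) / 8}`, has integral at most `8 / θ₁` over `[0, t]`.
-/

open Real

lemma rpow_le_one_add {x γ : ℝ} (hx : 0 ≤ x) (hγ0 : 0 ≤ γ) (hγ1 : γ ≤ 1) : x ^ γ ≤ 1 + x := by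
  rcases le_total x 1 with hx1 | hx1
  · linarith [rpow_le_one hx hx1 hγ0]
  · linarith [rpow_le_self_of_one_le hx1 hγ1]

lemma rpow_le_one_add_sq_rpow_half {s γ : ℝ} (hs : 0 ≤ s) (hγ : 0 ≤ γ) :
    s ^ γ ≤ (1 + s ^ 2) ^ (γ / 2) := by
  calc s ^ γ = (s ^ 2) ^ (γ / 2) := by
        rw [← rpow_natCast, ← rpow_mul hs]; congr 1; push_cast; ring
    _ ≤ (1 + s ^ 2) ^ (γ / 2) := by gcongr; linarith

lemma rpow_le_one_add_sub_add_one_add_sq_rpow {s t γ : ℝ} (hs : 0 ≤ s) (hst : s ≤ t)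
    (hγ0 : 0 ≤ γ) (hγ1 : γ ≤ 1) :
    t ^ γ ≤ 1 + (t - s) + (1 + s ^ 2) ^ (γ / 2) := by
  calc t ^ γ = ((t - s) + s) ^ γ := by ring_nf
    _ ≤ (t - s) ^ γ + s ^ γ := rpow_add_le_add_rpow (by linarith) hs hγ0 hγ1
    _ ≤ 1 + (t - s) + (1 + s ^ 2) ^ (γ / 2) := by
      linarith [rpow_le_one_add (sub_nonneg.2 hst) hγ0 hγ1, rpow_le_one_add_sq_rpow_half hs hγ0]

lemma integral_exp_neg_mul_sub {κ : ℝ} (hκ : κ ≠ 0) (t : ℝ) :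
    ∫ s in (0 : ℝ)..t, exp (-κ * (t - s)) = (1 - exp (-κ * t)) / κ := by
  have hderiv : ∀ s, HasDerivAt (fun s => exp (-κ * (t - s)) / κ) (exp (-κ * (t - s))) s := by
    intro s
    have := ((((hasDerivAt_id' s).const_sub t).const_mul (-κ)).exp).div_const κ
    refine this.congr_deriv ?_
    field_simp
  rw [intervalIntegral.integral_eq_sub_of_hasDerivAt (fun s _ => hderiv s)
    (Continuous.intervalIntegrable (by fun_prop) _ _)]
  simp only [sub_self, mul_zero, exp_zero, sub_zero]
  ring

lemma integral_exp_neg_mul_sub_le {κ : ℝ} (hκ : 0 < κ) {t : ℝ} :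
    ∫ s in (0 : ℝ)..t, exp (-κ * (t - s)) ≤ 1 / κ := by
  rw [integral_exp_neg_mul_sub hκ.ne']
  gcongr
  linarith [exp_pos (-κ * t)]

lemma exp_neg_mul_sub_mul_exp_neg_mul_le {κ c ν γ s t : ℝ} (hν : 0 ≤ ν) (hνκ : ν ≤ κ / 2)
    (hνc : ν ≤ c) (hγ0 : 0 ≤ γ) (hγ1 : γ ≤ 1) (hs : 0 ≤ s) (hst : s ≤ t) :
    exp (-κ * (t - s)) * exp (-c * (1 + s ^ 2) ^ (γ / 2)) ≤
      exp ν * exp (-ν * t ^ γ) * exp (-(κ / 2) * (t - s)) := by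
  simp only [← exp_add]
  refine exp_le_exp.2 ?_
  have hsplit := mul_le_mul_of_nonneg_left
    (rpow_le_one_add_sub_add_one_add_sq_rpow hs hst hγ0 hγ1) hν
  have hweight : 0 ≤ (1 + s ^ 2) ^ (γ / 2) := by positivity
  linarith [mul_le_mul_of_nonneg_right hνκ (sub_nonneg.2 hst),
    mul_le_mul_of_nonneg_right hνc hweight]

/-- `∫₀^t e^{−θ₁(t−s)/4}·e^{−(λ₁/2)⟨s⟩^γ} ds ≤ C·e^{−ν t^γ}` with `ν = min{θ₁/8, λ₁/4}`:
stretched-exponential (Gevrey) time decay is propagated through the exponentially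
decaying resolvent kernel. -/
theorem gevrey_decay_convolution {lam₁ θ₁ γ : ℝ} (hlam : 0 < lam₁) (hθ : 0 < θ₁)
    (hγ0 : 0 < γ) (hγ1 : γ ≤ 1) :
    ∃ C : ℝ, 0 < C ∧ ∀ t : ℝ, 0 ≤ t →
      (∫ s in (0 : ℝ)..t,
          Real.exp (-(θ₁ / 4) * (t - s)) *
            Real.exp (-(lam₁ / 2) * (1 + s ^ 2) ^ (γ / 2))) ≤
        C * Real.exp (-(min (θ₁ / 8) (lam₁ / 4)) * t ^ γ) := by
  set ν := min (θ₁ / 8) (lam₁ / 4)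
  have hν : 0 ≤ ν := le_min (by positivity) (by positivity)
  refine ⟨exp ν * (8 / θ₁), by positivity, fun t ht => ?_⟩
  calc (∫ s in (0 : ℝ)..t, exp (-(θ₁ / 4) * (t - s)) * exp (-(lam₁ / 2) * (1 + s ^ 2) ^ (γ / 2)))
      ≤ ∫ s in (0 : ℝ)..t, exp ν * exp (-ν * t ^ γ) * exp (-(θ₁ / 4 / 2) * (t - s)) := by
        refine intervalIntegral.integral_mono_on ht ?_
          (Continuous.intervalIntegrable (by fun_prop) _ _) fun s hs =>
          exp_neg_mul_sub_mul_exp_neg_mul_le hν ((min_le_left _ _).trans_eq (by ring))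
            ((min_le_right _ _).trans (by linarith)) hγ0.le hγ1 hs.1 hs.2
        have hweight : Continuous fun s : ℝ => (1 + s ^ 2) ^ (γ / 2) :=
          (by fun_prop : Continuous fun s : ℝ => 1 + s ^ 2).rpow_const
            fun _ => Or.inr (by positivity)
        exact Continuous.intervalIntegrable (by fun_prop) _ _
    _ ≤ exp ν * exp (-ν * t ^ γ) * (1 / (θ₁ / 4 / 2)) := by
        rw [intervalIntegral.integral_const_mul]
        gcongr
        exact integral_exp_neg_mul_sub_le (by positivity)
    _ = exp ν * (8 / θ₁) * exp (-ν * t ^ γ) := by ring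
end

section
/- Let γ ∈ (0,1], r₀ > 0 and θ₀ > 0. There exists a constant C > 0, depending only on γ, r₀ and θ₀, such that for every k ∈ ℤ³ with k ≠ 0 and every η ∈ ℝ³, ∫₀^∞ exp(−r₀·|s·k|^γ)·exp(−θ₀·|η − s·k|) ds ≤ C·exp(−(r₀/2)·|η|^γ) + C·exp(−(θ₀/2)·|η|), where |·| denotes the Euclidean norm on ℝ³ and s·k is the scalar multiple of the lattice vector k. -/
/-!
Where `‖η - s k‖ ≥ ‖η‖/2`, the second factor is at most `e^{-(θ₀/2)‖η‖}` and the first is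
integrable in `s`. Elsewhere `‖s k‖ > ‖η‖/2 > ‖η - s k‖`, so subadditivity of `t ↦ t^γ` gives
`‖η‖^γ ≤ 2‖s k‖^γ` and the first factor is at most `e^{-(r₀/2)‖η‖^γ}`; since `‖k‖ ≥ 1`, the reverse
triangle inequality bounds the second factor by `e^{-θ₀|s - ‖η‖/‖k‖|}`, a translate of a fixed
integrable function.
-/

/-- A lattice point `k ∈ ℤ³` viewed as a vector of `ℝ³`. -/
noncomputable def kv (k : Fin 3 → ℤ) : EuclideanSpace ℝ (Fin 3) :=
  (WithLp.equiv 2 (Fin 3 → ℝ)).symm (fun i => (k i : ℝ))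

open Real Set MeasureTheory

lemma EuclideanSpace.one_le_norm_intCast {ι : Type*} [Fintype ι] {k : ι → ℤ} (hk : k ≠ 0) :
    1 ≤ ‖WithLp.toLp 2 (fun i => (k i : ℝ))‖ := by
  obtain ⟨i, hi⟩ := Function.ne_iff.mp hk
  calc (1 : ℝ) ≤ |(k i : ℝ)| := mod_cast Int.one_le_abs hi
    _ ≤ _ := PiLp.norm_apply_le (WithLp.toLp 2 (fun i => (k i : ℝ))) i

lemma abs_norm_div_sub_le_norm_sub_smul {E : Type*} [NormedAddCommGroup E] [NormedSpace ℝ E]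
    {v : E} (hv : 1 ≤ ‖v‖) (x : E) {s : ℝ} (hs : 0 ≤ s) :
    |‖x‖ / ‖v‖ - s| ≤ ‖x - s • v‖ := by
  have hv0 : 0 < ‖v‖ := one_pos.trans_le hv
  have key : ‖v‖ * |‖x‖ / ‖v‖ - s| = |‖x‖ - ‖s • v‖| := by
    rw [norm_smul, norm_of_nonneg hs, ← abs_of_pos hv0, ← abs_mul, abs_of_pos hv0]
    field_simp
  calc |‖x‖ / ‖v‖ - s| ≤ ‖v‖ * |‖x‖ / ‖v‖ - s| := le_mul_of_one_le_left (abs_nonneg _) hv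
    _ ≤ ‖x - s • v‖ := key ▸ abs_norm_sub_norm_le x (s • v)

lemma integrable_exp_neg_mul_abs {b : ℝ} (hb : 0 < b) :
    Integrable (fun u : ℝ => exp (-b * |u|)) := by
  rw [← integrableOn_univ, ← Iic_union_Ioi (a := (0 : ℝ))]
  refine ((integrableOn_exp_mul_Iic hb 0).congr_fun (fun u hu => ?_) measurableSet_Iic).union
    ((exp_neg_integrableOn_Ioi 0 hb).congr_fun (fun u hu => ?_) measurableSet_Ioi)
  · rw [abs_of_nonpos hu, mul_neg, neg_mul, neg_neg]
  · rw [abs_of_pos hu]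

lemma integrableOn_exp_neg_mul_rpow {γ b : ℝ} (hγ : 0 < γ) (hb : 0 < b) :
    IntegrableOn (fun s : ℝ => exp (-b * s ^ γ)) (Ioi 0) := by
  simpa using integrableOn_rpow_mul_exp_neg_mul_rpow (s := 0) neg_one_lt_zero hγ hb

section

variable {γ r θ : ℝ}

lemma exp_mul_exp_le_of_le_add (hγ0 : 0 ≤ γ) (hγ1 : γ ≤ 1) (hr : 0 ≤ r) (hθ : 0 ≤ θ)
    {a b n : ℝ} (ha : 0 ≤ a) (hb : 0 ≤ b) (hn : 0 ≤ n) (hnab : n ≤ a + b) :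
    exp (-r * a ^ γ) * exp (-θ * b) ≤
      exp (-(r / 2) * a ^ γ) * exp (-(θ / 2) * n) + exp (-(r / 2) * n ^ γ) * exp (-θ * b) := by
  rcases le_or_gt (n / 2) b with hbn | hbn
  · have hfirst :
        exp (-r * a ^ γ) * exp (-θ * b) ≤ exp (-(r / 2) * a ^ γ) * exp (-(θ / 2) * n) := by
      have haγ := rpow_nonneg ha γ
      gcongr exp ?_ * exp ?_ <;> nlinarith
    exact le_add_of_le_of_nonneg hfirst (by positivity)
  · have hna : n ^ γ ≤ 2 * a ^ γ := calc
      n ^ γ ≤ (a + b) ^ γ := rpow_le_rpow hn hnab hγ0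
      _ ≤ a ^ γ + b ^ γ := rpow_add_le_add_rpow ha hb hγ0 hγ1
      _ ≤ 2 * a ^ γ := by linarith [rpow_le_rpow hb (by linarith : b ≤ a) hγ0]
    have hsecond : exp (-r * a ^ γ) * exp (-θ * b) ≤ exp (-(r / 2) * n ^ γ) * exp (-θ * b) := by
      gcongr exp ?_ * _; nlinarith
    exact le_add_of_nonneg_of_le (by positivity) hsecond

variable {E : Type*} [NormedAddCommGroup E] [NormedSpace ℝ E]

lemma echo_integrand_le (hγ0 : 0 ≤ γ) (hγ1 : γ ≤ 1) (hr : 0 ≤ r) (hθ : 0 ≤ θ)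
    {v : E} (hv : 1 ≤ ‖v‖) (x : E) {s : ℝ} (hs : 0 ≤ s) :
    exp (-r * ‖s • v‖ ^ γ) * exp (-θ * ‖x - s • v‖) ≤
      exp (-(r / 2) * s ^ γ) * exp (-(θ / 2) * ‖x‖) +
        exp (-(r / 2) * ‖x‖ ^ γ) * exp (-θ * |s - ‖x‖ / ‖v‖|) := by
  have hsv : s ≤ ‖s • v‖ := by
    rw [norm_smul, norm_of_nonneg hs]; exact le_mul_of_one_le_right hs hv
  refine (exp_mul_exp_le_of_le_add hγ0 hγ1 hr hθ (norm_nonneg _) (norm_nonneg _)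
    (norm_nonneg _) (norm_le_insert' x (s • v))).trans ?_
  have h1 := rpow_le_rpow hs hsv hγ0
  have h2 := abs_sub_comm s (‖x‖ / ‖v‖) ▸ abs_norm_div_sub_le_norm_sub_smul hv x hs
  gcongr exp ?_ * _ + _ * exp ?_ <;> nlinarith

lemma echo_integral_le (hγ0 : 0 < γ) (hγ1 : γ ≤ 1) (hr : 0 < r) (hθ : 0 < θ)
    {v : E} (hv : 1 ≤ ‖v‖) (x : E) :
    ∫ s in Ioi (0 : ℝ), exp (-r * ‖s • v‖ ^ γ) * exp (-θ * ‖x - s • v‖) ≤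
      (∫ s in Ioi (0 : ℝ), exp (-(r / 2) * s ^ γ)) * exp (-(θ / 2) * ‖x‖) +
        exp (-(r / 2) * ‖x‖ ^ γ) * ∫ u, exp (-θ * |u|) := by
  set c := ‖x‖ / ‖v‖
  have hshift : Integrable (fun s => exp (-θ * |s - c|)) :=
    (integrable_exp_neg_mul_abs hθ).comp_sub_right c
  have hf1 : IntegrableOn (fun s => exp (-(r / 2) * s ^ γ) * exp (-(θ / 2) * ‖x‖)) (Ioi 0) :=
    (integrableOn_exp_neg_mul_rpow hγ0 (half_pos hr)).mul_const _
  have hf2 : IntegrableOn (fun s => exp (-(r / 2) * ‖x‖ ^ γ) * exp (-θ * |s - c|)) (Ioi 0) :=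
    (hshift.const_mul _).integrableOn
  calc ∫ s in Ioi (0 : ℝ), exp (-r * ‖s • v‖ ^ γ) * exp (-θ * ‖x - s • v‖)
      ≤ ∫ s in Ioi (0 : ℝ), (exp (-(r / 2) * s ^ γ) * exp (-(θ / 2) * ‖x‖) +
          exp (-(r / 2) * ‖x‖ ^ γ) * exp (-θ * |s - c|)) :=
        integral_mono_of_nonneg (.of_forall fun _ => by positivity) (hf1.add hf2)
          (ae_restrict_of_forall_mem measurableSet_Ioi fun s hs =>
            echo_integrand_le hγ0.le hγ1 hr.le hθ.le hv x (le_of_lt hs))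
    _ = (∫ s in Ioi (0 : ℝ), exp (-(r / 2) * s ^ γ)) * exp (-(θ / 2) * ‖x‖) +
          exp (-(r / 2) * ‖x‖ ^ γ) * ∫ s in Ioi (0 : ℝ), exp (-θ * |s - c|) := by
        rw [integral_add hf1 hf2, integral_mul_const, integral_const_mul]
    _ ≤ _ := by
        gcongr
        calc ∫ s in Ioi (0 : ℝ), exp (-θ * |s - c|)
            ≤ ∫ s, exp (-θ * |s - c|) :=
              setIntegral_le_integral hshift (.of_forall fun _ => by positivity)
          _ = ∫ u, exp (-θ * |u|) := integral_sub_right_eq_self (fun u => exp (-θ * |u|)) c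

end

/-- `∫₀^∞ e^{−r₀|sk|^γ}·e^{−θ₀|η−sk|} ds ≤ C·e^{−(r₀/2)|η|^γ} + C·e^{−(θ₀/2)|η|}`:
the echo integral inherits Gevrey decay in `η`. -/
theorem echo_integral_decay {γ r₀ θ₀ : ℝ} (hγ0 : 0 < γ) (hγ1 : γ ≤ 1)
    (hr : 0 < r₀) (hθ : 0 < θ₀) :
    ∃ C : ℝ, 0 < C ∧ ∀ k : Fin 3 → ℤ, k ≠ 0 → ∀ η : EuclideanSpace ℝ (Fin 3),
      (∫ s in Set.Ioi (0 : ℝ),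
          Real.exp (-r₀ * ‖s • kv k‖ ^ γ) * Real.exp (-θ₀ * ‖η - s • kv k‖)) ≤
        C * Real.exp (-(r₀ / 2) * ‖η‖ ^ γ) + C * Real.exp (-(θ₀ / 2) * ‖η‖) := by
  set K := ∫ s in Ioi (0 : ℝ), exp (-(r₀ / 2) * s ^ γ)
  set L := ∫ u, exp (-θ₀ * |u|)
  have hK : 0 ≤ K := setIntegral_nonneg measurableSet_Ioi fun _ _ => (exp_pos _).le
  have hL : 0 < L := integral_exp_pos (integrable_exp_neg_mul_abs hθ)
  refine ⟨K + L, by positivity, fun k hk η => ?_⟩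
  calc _ ≤ K * exp (-(θ₀ / 2) * ‖η‖) + exp (-(r₀ / 2) * ‖η‖ ^ γ) * L :=
        echo_integral_le hγ0 hγ1 hr hθ (EuclideanSpace.one_le_norm_intCast hk) η
    _ ≤ _ := by nlinarith [exp_pos (-(θ₀ / 2) * ‖η‖), exp_pos (-(r₀ / 2) * ‖η‖ ^ γ)]
end
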